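/- Let X be a real vector space and E a Dedekind complete vector lattice. The set QL(X,E) of differences of sublinear operators from X to E is closed under addition, under multiplication by any orthomorphism α of E (namely α ∘ f ∈ QL(X,E) when f ∈ QL(X,E)), and under pointwise finite suprema and infima; in particular it is a module over the orthomorphism algebra of E. -/

import Mathlib

/-!
Sums and negatives of differences of sublinear operators are again such differences, and so are
suprema, because `(p - q) ⊔ (r - s) = (p + s) ⊔ (r + q) - (q + s)`; infima follow from
`f ⊓ g = -(-f ⊔ -g)`. Of an orthomorphism `α` only order boundedness is needed: by Dedekind
completeness `S a := sup α [0, a]` exists for `a ≥ 0`, it is additive by the Riesz decomposition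
`[0, a + b] = [0, a] + [0, b]` and positively homogeneous, so it extends to a positive linear
operator `S` with `S - α` positive as well (Riesz–Kantorovich). Positive linear operators map
sublinear operators to sublinear ones, and `α ∘ f = S ∘ f - (S - α) ∘ f`.
-/

section QL

variable {X E : Type*} [AddCommGroup X] [Module ℝ X]
  [Lattice E] [AddCommGroup E] [CovariantClass E E (· + ·) (· ≤ ·)] [Module ℝ E]

/-- A sublinear operator: subadditive and positively homogeneous. -/
def Sublinear (p : X → E) : Prop :=
  (∀ x y : X, p (x + y) ≤ p x + p y) ∧
  (∀ (l : ℝ), 0 ≤ l → ∀ x : X, p (l • x) = l • p x)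

/-- A quasilinear operator: a (pointwise) difference of sublinear operators. -/
def IsQL (f : X → E) : Prop :=
  ∃ p q : X → E, Sublinear p ∧ Sublinear q ∧ ∀ x : X, f x = p x - q x

/-- Order boundedness of a linear endomorphism. -/
def OrdBounded (T : E →ₗ[ℝ] E) : Prop :=
  ∀ a b : E, ∃ c d : E, ∀ x : E, x ∈ Set.Icc a b → T x ∈ Set.Icc c d

/-- An orthomorphism: an order bounded, band-preserving linear endomorphism. -/
def IsOrthomorphism (T : E →ₗ[ℝ] E) : Prop :=
  OrdBounded T ∧
  ∀ x y : E, (x ⊔ -x) ⊓ (y ⊔ -y) = 0 → ((T x) ⊔ -(T x)) ⊓ (y ⊔ -y) = 0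

end QL

open Set Pointwise

theorem Icc_zero_add_Icc_zero {E : Type*} [Lattice E] [AddCommGroup E] [AddLeftMono E]
    {a b : E} (ha : 0 ≤ a) (hb : 0 ≤ b) :
    Icc 0 a + Icc 0 b = Icc 0 (a + b) := by
  refine (Icc_add_Icc_subset 0 a 0 b).trans_eq (by rw [zero_add]) |>.antisymm ?_
  rintro v ⟨hv0, hv⟩
  refine ⟨v ⊓ a, ⟨le_inf hv0 ha, inf_le_right⟩, v - v ⊓ a, ⟨sub_nonneg.2 inf_le_left, ?_⟩,
    add_sub_cancel _ _⟩
  rw [sub_le_comm]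
  exact le_inf (sub_le_self _ hb) (sub_le_iff_le_add.2 hv)

section VectorLattice

variable {E : Type*} [Lattice E] [AddCommGroup E] [Module ℝ E]

theorem smul_sup_of_nonneg [PosSMulMono ℝ E] {l : ℝ} (hl : 0 ≤ l) (a b : E) :
    l • (a ⊔ b) = l • a ⊔ l • b := by
  rcases hl.eq_or_lt with rfl | hl
  · simp
  · exact (OrderIso.smulRight hl).map_sup a b

theorem LinearMap.monotone_of_map_nonneg [AddLeftMono E] (S : E →ₗ[ℝ] E)
    (hS : ∀ a, 0 ≤ a → 0 ≤ S a) : Monotone S :=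
  fun a b hab => sub_nonneg.1 (map_sub S b a ▸ hS _ (sub_nonneg.2 hab))

theorem exists_linearMap_eq_of_nonneg [AddLeftMono E] [PosSMulMono ℝ E] {F : Type*}
    [AddCommGroup F] [Module ℝ F] (φ : E → F)
    (hadd : ∀ a b, 0 ≤ a → 0 ≤ b → φ (a + b) = φ a + φ b)
    (hsmul : ∀ l : ℝ, 0 < l → ∀ a, 0 ≤ a → φ (l • a) = l • φ a) :
    ∃ S : E →ₗ[ℝ] F, ∀ a, 0 ≤ a → S a = φ a := by
  have hφ0 : φ 0 = 0 := by simpa using hadd 0 0 le_rfl le_rfl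
  have hsub : ∀ a b, 0 ≤ a → 0 ≤ b → φ (a - b)⁺ - φ (a - b)⁻ = φ a - φ b := by
    intro a b ha hb
    rw [sub_eq_sub_iff_add_eq_add, ← hadd _ _ (posPart_nonneg _) hb,
      ← hadd _ _ ha (negPart_nonneg _), sub_eq_sub_iff_add_eq_add.1 (posPart_sub_negPart _)]
  let S : E →+ F :=
    { toFun e := φ e⁺ - φ e⁻
      map_zero' := by simp [hφ0]
      map_add' x y := by
        have hxy : x + y = (x⁺ + y⁺) - (x⁻ + y⁻) := by
          rw [add_sub_add_comm, posPart_sub_negPart, posPart_sub_negPart]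
        show φ (x + y)⁺ - φ (x + y)⁻ = φ x⁺ - φ x⁻ + (φ y⁺ - φ y⁻)
        rw [hxy, hsub _ _ (add_nonneg (posPart_nonneg x) (posPart_nonneg y))
            (add_nonneg (negPart_nonneg x) (negPart_nonneg y)),
          hadd _ _ (posPart_nonneg x) (posPart_nonneg y),
          hadd _ _ (negPart_nonneg x) (negPart_nonneg y)]
        abel }
  have hS_pos_smul : ∀ l : ℝ, 0 < l → ∀ e, S (l • e) = l • S e := by
    intro l hl e
    show φ (l • e)⁺ - φ (l • e)⁻ = l • (φ e⁺ - φ e⁻)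
    rw [← posPart_sub_negPart e, smul_sub, hsub _ _ (smul_nonneg hl.le (posPart_nonneg e))
        (smul_nonneg hl.le (negPart_nonneg e)), posPart_sub_negPart,
      hsmul l hl _ (posPart_nonneg e), hsmul l hl _ (negPart_nonneg e), smul_sub]
  refine ⟨{ S with map_smul' := fun l e => ?_ }, fun a ha => ?_⟩
  · show S (l • e) = l • S e
    rcases lt_trichotomy l 0 with hl | rfl | hl
    · simpa only [neg_smul, map_neg, neg_inj] using hS_pos_smul (-l) (neg_pos.2 hl) e
    · rw [zero_smul, zero_smul, map_zero]
    · exact hS_pos_smul l hl e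
  · show φ a⁺ - φ a⁻ = φ a
    rw [posPart_eq_self.2 ha, negPart_eq_zero.2 ha, hφ0, sub_zero]

theorem isLUB_image_Icc_zero_add [AddLeftMono E] (β : E →ₗ[ℝ] E) {a b u v : E}
    (ha : 0 ≤ a) (hb : 0 ≤ b)
    (hu : IsLUB (β '' Icc 0 a) u) (hv : IsLUB (β '' Icc 0 b) v) :
    IsLUB (β '' Icc 0 (a + b)) (u + v) := by
  rw [← Icc_zero_add_Icc_zero ha hb, image_add]
  exact hu.add hv

theorem isLUB_image_Icc_zero_smul [PosSMulMono ℝ E] (β : E →ₗ[ℝ] E) {l : ℝ} (hl : 0 < l)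
    {a u : E} (hu : IsLUB (β '' Icc 0 a) u) : IsLUB (β '' Icc 0 (l • a)) (l • u) := by
  let e : E ≃o E := OrderIso.smulRight hl
  have : β '' Icc 0 (l • a) = e '' (β '' Icc 0 a) := by
    rw [← smul_zero l, show Icc (l • 0) (l • a) = e '' Icc 0 a from (e.image_Icc 0 a).symm,
      image_image, image_image]
    simp [e]
  rw [this]
  exact e.isLUB_image'.2 hu

theorem OrdBounded.exists_isLUB_image_Icc_zero
    (hDC : ∀ s : Set E, s.Nonempty → BddAbove s → ∃ a, IsLUB s a) {β : E →ₗ[ℝ] E}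
    (hβ : OrdBounded β) {a : E} (ha : 0 ≤ a) : ∃ u, IsLUB (β '' Icc 0 a) u := by
  obtain ⟨_, d, hd⟩ := hβ 0 a
  exact hDC _ ⟨β 0, mem_image_of_mem β ⟨le_rfl, ha⟩⟩
    ⟨d, forall_mem_image.2 fun v hv => (hd v hv).2⟩

theorem OrdBounded.exists_monotone_sub [AddLeftMono E] [PosSMulMono ℝ E]
    (hDC : ∀ s : Set E, s.Nonempty → BddAbove s → ∃ a, IsLUB s a) {β : E →ₗ[ℝ] E}
    (hβ : OrdBounded β) : ∃ S : E →ₗ[ℝ] E, Monotone S ∧ Monotone (S - β) := by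
  choose! φ hφ using fun a (ha : 0 ≤ a) => hβ.exists_isLUB_image_Icc_zero hDC ha
  obtain ⟨S, hS⟩ := exists_linearMap_eq_of_nonneg φ
    (fun a b ha hb => (hφ _ (add_nonneg ha hb)).unique
      (isLUB_image_Icc_zero_add β ha hb (hφ a ha) (hφ b hb)))
    (fun l hl a ha => (hφ _ (smul_nonneg hl.le ha)).unique
      (isLUB_image_Icc_zero_smul β hl (hφ a ha)))
  refine ⟨S, S.monotone_of_map_nonneg fun a ha => ?_,
    (S - β).monotone_of_map_nonneg fun a ha => ?_⟩
  · rw [hS a ha, ← map_zero β]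
    exact (hφ a ha).1 (mem_image_of_mem β ⟨le_rfl, ha⟩)
  · rw [LinearMap.sub_apply, hS a ha, sub_nonneg]
    exact (hφ a ha).1 (mem_image_of_mem β ⟨ha, le_rfl⟩)

end VectorLattice

namespace Sublinear

variable {X E : Type*} [AddCommGroup X] [Module ℝ X] [Lattice E] [AddCommGroup E]
  [Module ℝ E] {p q : X → E}

theorem add [AddLeftMono E] (hp : Sublinear p) (hq : Sublinear q) : Sublinear (p + q) :=
  ⟨fun x y => (add_le_add (hp.1 x y) (hq.1 x y)).trans_eq (add_add_add_comm _ _ _ _),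
    fun l hl x => by simp only [Pi.add_apply, hp.2 l hl, hq.2 l hl, smul_add]⟩

theorem sup [AddLeftMono E] [PosSMulMono ℝ E] (hp : Sublinear p) (hq : Sublinear q) :
    Sublinear (p ⊔ q) :=
  ⟨fun x y => (sup_le_sup (hp.1 x y) (hq.1 x y)).trans
      (sup_le (add_le_add le_sup_left le_sup_left) (add_le_add le_sup_right le_sup_right)),
    fun l hl x => by simp only [Pi.sup_apply, hp.2 l hl, hq.2 l hl, smul_sup_of_nonneg hl]⟩

theorem comp_of_monotone {F : Type*} [Lattice F] [AddCommGroup F] [Module ℝ F]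
    {S : E →ₗ[ℝ] F} (hS : Monotone S) (hp : Sublinear p) : Sublinear (S ∘ p) :=
  ⟨fun x y => (hS (hp.1 x y)).trans_eq (map_add S _ _),
    fun l hl x => by simp only [Function.comp_apply, hp.2 l hl, map_smul]⟩

end Sublinear

namespace IsQL

variable {X E : Type*} [AddCommGroup X] [Module ℝ X] [Lattice E] [AddCommGroup E]
  [Module ℝ E] {f g : X → E}

theorem _root_.isQL_iff :
    IsQL f ↔ ∃ p q : X → E, Sublinear p ∧ Sublinear q ∧ f = p - q := by
  simp only [IsQL, funext_iff, Pi.sub_apply]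

theorem add [AddLeftMono E] (hf : IsQL f) (hg : IsQL g) : IsQL (f + g) := by
  obtain ⟨p, q, hp, hq, rfl⟩ := isQL_iff.1 hf
  obtain ⟨r, s, hr, hs, rfl⟩ := isQL_iff.1 hg
  exact isQL_iff.2 ⟨p + r, q + s, hp.add hr, hq.add hs, by abel⟩

theorem neg (hf : IsQL f) : IsQL (-f) := by
  obtain ⟨p, q, hp, hq, rfl⟩ := isQL_iff.1 hf
  exact isQL_iff.2 ⟨q, p, hq, hp, neg_sub p q⟩

theorem sub [AddLeftMono E] (hf : IsQL f) (hg : IsQL g) : IsQL (f - g) :=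
  sub_eq_add_neg f g ▸ hf.add hg.neg

theorem sup [AddLeftMono E] [PosSMulMono ℝ E] (hf : IsQL f) (hg : IsQL g) : IsQL (f ⊔ g) := by
  obtain ⟨p, q, hp, hq, rfl⟩ := isQL_iff.1 hf
  obtain ⟨r, s, hr, hs, rfl⟩ := isQL_iff.1 hg
  refine isQL_iff.2 ⟨(p + s) ⊔ (r + q), q + s, (hp.add hs).sup (hr.add hq), hq.add hs, ?_⟩
  ext x
  simp only [Pi.sup_apply, Pi.sub_apply, Pi.add_apply, sup_sub]
  congr 1 <;> abel

theorem inf [AddLeftMono E] [PosSMulMono ℝ E] (hf : IsQL f) (hg : IsQL g) : IsQL (f ⊓ g) := by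
  have h : f ⊓ g = -(-f ⊔ -g) := by
    ext x
    simp only [Pi.inf_apply, Pi.neg_apply, Pi.sup_apply, neg_sup, neg_neg]
  exact h ▸ (hf.neg.sup hg.neg).neg

theorem comp_of_monotone {F : Type*} [Lattice F] [AddCommGroup F] [Module ℝ F]
    {S : E →ₗ[ℝ] F} (hS : Monotone S) (hf : IsQL f) : IsQL (S ∘ f) := by
  obtain ⟨p, q, hp, hq, rfl⟩ := isQL_iff.1 hf
  refine isQL_iff.2 ⟨S ∘ p, S ∘ q, hp.comp_of_monotone hS, hq.comp_of_monotone hS, ?_⟩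
  ext x
  simp

theorem comp_of_ordBounded [AddLeftMono E] [PosSMulMono ℝ E]
    (hDC : ∀ s : Set E, s.Nonempty → BddAbove s → ∃ a, IsLUB s a) {β : E →ₗ[ℝ] E}
    (hβ : OrdBounded β) (hf : IsQL f) : IsQL (β ∘ f) := by
  obtain ⟨S, hS, hT⟩ := hβ.exists_monotone_sub hDC
  have h : β ∘ f = S ∘ f - (S - β) ∘ f := by
    ext x
    simp
  exact h ▸ (hf.comp_of_monotone hS).sub (hf.comp_of_monotone hT)

end IsQL

section QL

variable {X E : Type*} [AddCommGroup X] [Module ℝ X]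
  [Lattice E] [AddCommGroup E] [CovariantClass E E (· + ·) (· ≤ ·)] [Module ℝ E]

/-- `QL(X,E)` is closed under addition, under composition with any
orthomorphism of `E`, and under pointwise (finite) suprema and infima; hence it is
a module over the orthomorphism algebra of `E`. -/
theorem stmt_12
    (hDC : ∀ s : Set E, s.Nonempty → BddAbove s → ∃ a, IsLUB s a)
    (hsmul : ∀ (l : ℝ), 0 ≤ l → ∀ x y : E, x ≤ y → l • x ≤ l • y) :
    (∀ f g : X → E, IsQL f → IsQL g → IsQL (fun x => f x + g x)) ∧
    (∀ α : E →ₗ[ℝ] E, IsOrthomorphism α →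
      ∀ f : X → E, IsQL f → IsQL (fun x => α (f x))) ∧
    (∀ f g : X → E, IsQL f → IsQL g → IsQL (fun x => f x ⊔ g x)) ∧
    (∀ f g : X → E, IsQL f → IsQL g → IsQL (fun x => f x ⊓ g x)) := by
  have : PosSMulMono ℝ E := ⟨fun l hl _ _ h => hsmul l hl _ _ h⟩
  exact ⟨fun _ _ hf hg => hf.add hg, fun _ hα _ hf => hf.comp_of_ordBounded hDC hα.1,
    fun _ _ hf hg => hf.sup hg, fun _ _ hf hg => hf.inf hg⟩

end QL
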